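/- arXiv:1707.08486 — 2 statements merged into one kernel-verified Lean document; each statement's English description precedes it below -/
import Mathlib

section
/- Let ρ > 0 and define a sequence by A_0 = α_0 = 1 - 1/ρ, and for each k ≥ 0 let α_{k+1} be the largest root of the quadratic equation ρ²α_{k+1}² = A_k + α_{k+1}, with A_{k+1} = A_k + α_{k+1}. Then for all k ≥ 1, (k - 1 + 2ρ)²/(4ρ²) ≤ A_k ≤ (k - 1 + 2ρ)²/ρ². -/
/-- Growth rate of the sequence `A k` in the Randomized Similar Triangles Method:
`A 0 = α 0 = 1 - 1/ρ`, `α (k+1)` is the largest root of `ρ²α² = A k + α`, i.e.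
`α (k+1) = (1 + √(1 + 4ρ²·A k)) / (2ρ²)`, and `A (k+1) = A k + α (k+1)`.
Then `(k-1+2ρ)²/(4ρ²) ≤ A k ≤ (k-1+2ρ)²/ρ²` for all `k ≥ 1`. -/
theorem stmt_0 (ρ : ℝ) (hρ : 1 ≤ ρ) (α A : ℕ → ℝ)
    (hα0 : α 0 = 1 - 1 / ρ) (hA0 : A 0 = 1 - 1 / ρ)
    (hα : ∀ k : ℕ, α (k + 1) = (1 + Real.sqrt (1 + 4 * ρ ^ 2 * A k)) / (2 * ρ ^ 2))
    (hA : ∀ k : ℕ, A (k + 1) = A k + α (k + 1)) :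
    ∀ k : ℕ, 1 ≤ k →
      ((k : ℝ) - 1 + 2 * ρ) ^ 2 / (4 * ρ ^ 2) ≤ A k ∧
        A k ≤ ((k : ℝ) - 1 + 2 * ρ) ^ 2 / ρ ^ 2 := by
  have hρ0 : (0:ℝ) < ρ := lt_of_lt_of_le one_pos hρ
  have hρ2 : (0:ℝ) < ρ ^ 2 := by positivity
  have hρ4 : (0:ℝ) < 4 * ρ ^ 2 := by positivity
  intro k hk
  induction k with
  | zero => omega
  | succ n ih =>
    rcases Nat.lt_or_ge n 1 with h1 | h1
    · -- base case : n = 0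
      have hn : n = 0 := by omega
      subst hn
      have hsq : 1 + 4 * ρ ^ 2 * A 0 = (2 * ρ - 1) ^ 2 := by
        rw [hA0]; field_simp; ring
      have hs : Real.sqrt (1 + 4 * ρ ^ 2 * A 0) = 2 * ρ - 1 := by
        rw [hsq, Real.sqrt_sq (by linarith)]
      have hA1 : A 1 = 1 := by
        rw [hA 0, hα 0, hs, hA0]; field_simp; ring
      push_cast
      rw [hA1, show (1:ℝ) - 1 + 2 * ρ = 2 * ρ from by ring]
      constructor
      · have : (2 * ρ) ^ 2 / (4 * ρ ^ 2) = 1 := by field_simp; ring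
        linarith
      · have : (2 * ρ) ^ 2 / ρ ^ 2 = 4 := by field_simp; ring
        linarith
    · -- inductive step : n ≥ 1
      obtain ⟨ihL, ihU⟩ := ih h1
      set t : ℝ := (n : ℝ) - 1 + 2 * ρ with ht
      have hn1 : (1:ℝ) ≤ (n:ℝ) := by exact_mod_cast h1
      have ht2 : (2:ℝ) ≤ t := by simp only [ht]; linarith
      have hA_lb : t ^ 2 / (4 * ρ ^ 2) ≤ A n := ihL
      have hA_ub : A n ≤ t ^ 2 / ρ ^ 2 := ihU
      have hA_nonneg : 0 ≤ A n := le_trans (by positivity) hA_lb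
      have h4ρA : t ^ 2 ≤ 4 * ρ ^ 2 * A n := by
        have := (div_le_iff₀ hρ4).mp hA_lb
        linarith
      have h4ρA' : 4 * ρ ^ 2 * A n ≤ 4 * t ^ 2 := by
        have := (le_div_iff₀ hρ2).mp hA_ub
        nlinarith
      set s : ℝ := Real.sqrt (1 + 4 * ρ ^ 2 * A n) with hsdef
      have hs_lb : t ≤ s := by
        rw [hsdef]
        rw [show t = Real.sqrt (t ^ 2) from (Real.sqrt_sq (by linarith)).symm]
        apply Real.sqrt_le_sqrt
        linarith
      have hs_ub : s ≤ 1 + 2 * t := by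
        rw [hsdef]
        rw [show (1 + 2 * t : ℝ) = Real.sqrt ((1 + 2 * t) ^ 2) from
          (Real.sqrt_sq (by linarith)).symm]
        apply Real.sqrt_le_sqrt
        nlinarith
      have hAn1 : A (n + 1) = A n + (1 + s) / (2 * ρ ^ 2) := by
        rw [hA n, hα n]
      have ecast : ((n : ℝ) + 1) - 1 + 2 * ρ = t + 1 := by rw [ht]; ring
      push_cast
      rw [hAn1, ecast]
      constructor
      · rw [show A n + (1 + s) / (2 * ρ ^ 2)
            = (4 * ρ ^ 2 * A n + 2 * (1 + s)) / (4 * ρ ^ 2) by field_simp; ring]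
        rw [div_le_div_iff₀ hρ4 hρ4]
        nlinarith
      · rw [show A n + (1 + s) / (2 * ρ ^ 2)
            = (2 * ρ ^ 2 * A n + (1 + s)) / (2 * ρ ^ 2) by field_simp]
        rw [div_le_div_iff₀ (by positivity) hρ2]
        nlinarith
end

section
/- Let ρ ≥ 1 and let sequences x_k, u_k in a convex set Q be generated by x_0 = u_0, x_{k+1} = y_{k+1} + ρ(α_{k+1}/A_{k+1})(u_{k+1} - u_k), and y_{k+1} = (α_{k+1}u_k + A_k x_k)/A_{k+1}, where A_{k+1} = A_k + α_{k+1} = ρ²α_{k+1}², A_0 = α_0 = 1 - 1/ρ, and u_k ∈ Q for all k. Then for every k, x_k is a convex combination of u_0, ..., u_k, and hence x_k, y_k ∈ Q. -/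
/-! With `θ k = ρ α k / A k`, the recursion reads
`x (k+1) = (A k / A (k+1)) x k + (α (k+1) / A (k+1) - θ (k+1)) u k + θ (k+1) u (k+1)`.
By induction `x k` is a convex combination of `u 0, …, u k` whose weight on `u k` is
`c = θ k` (`c = 1` for `k = 0`); the new weight on `u k` is then
`r (1 - c) + (c - θ (k+1))` with `r = α (k+1) / A (k+1)`, which is nonnegative because
`θ (k+1) = 1 / (ρ α (k+1))`, `ρ α 1 = 1` and `α` increases (as `A = ρ² α²` does), so that
`θ` is non-increasing with values in `(0, 1]`. Finally `y (k+1)` is a convex combination of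
`u k` and `x k`. -/

open Finset

section ConvexComb

variable {E : Type*} [AddCommGroup E] [Module ℝ E]

def IsConvexCombWithLast (u : ℕ → E) (n : ℕ) (x : E) (c : ℝ) : Prop :=
  ∃ γ : ℕ → ℝ, (∀ l, 0 ≤ γ l) ∧ ∑ l ∈ range (n + 1), γ l = 1 ∧
    x = ∑ l ∈ range (n + 1), γ l • u l ∧ γ n = c

theorem isConvexCombWithLast_zero (u : ℕ → E) : IsConvexCombWithLast u 0 (u 0) 1 :=
  ⟨fun l => if l = 0 then 1 else 0, fun l => by positivity, by simp, by simp, rfl⟩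

theorem IsConvexCombWithLast.mem {u : ℕ → E} {n : ℕ} {x : E} {c : ℝ}
    (h : IsConvexCombWithLast u n x c) {Q : Set E} (hQ : Convex ℝ Q) (hu : ∀ l, u l ∈ Q) :
    x ∈ Q := by
  obtain ⟨γ, hγ, hsum, rfl, -⟩ := h
  exact hQ.sum_mem (fun l _ => hγ l) hsum fun l _ => hu l

theorem IsConvexCombWithLast.step {u : ℕ → E} {n : ℕ} {x : E} {c : ℝ}
    (h : IsConvexCombWithLast u n x c) {a b t : ℝ} (ha : 0 ≤ a) (hb : 0 ≤ a * c + b)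
    (ht : 0 ≤ t) (habt : a + b + t = 1) :
    IsConvexCombWithLast u (n + 1) (a • x + b • u n + t • u (n + 1)) t := by
  obtain ⟨γ, hγ, hsum, rfl, rfl⟩ := h
  set γ' : ℕ → ℝ := fun l => if l = n + 1 then t else a * γ l + if l = n then b else 0
  have hlow : ∀ l ∈ range n, γ' l = a * γ l := fun l hl => by
    have := mem_range.mp hl
    simp only [γ', if_neg (by omega : l ≠ n + 1), if_neg (by omega : l ≠ n), add_zero]
  have hn : γ' n = a * γ n + b := by simp [γ']
  have hn1 : γ' (n + 1) = t := by simp [γ']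
  refine ⟨γ', fun l => ?_, ?_, ?_, hn1⟩
  · simp only [γ']
    split_ifs with h1 h2
    · exact ht
    · subst h2; exact hb
    · simpa using mul_nonneg ha (hγ l)
  · rw [sum_range_succ, sum_range_succ, hn, hn1, sum_congr rfl hlow, ← mul_sum]
    rw [sum_range_succ] at hsum
    linear_combination a * hsum + habt
  · conv_rhs => rw [sum_range_succ, sum_range_succ, hn, hn1,
      sum_congr rfl fun l hl => by rw [hlow l hl]]
    rw [sum_range_succ, smul_add, smul_sum]
    simp only [smul_smul, add_smul]
    abel

theorem IsConvexCombWithLast.rstm_step {u : ℕ → E} {k : ℕ} {x y : E} {c A A' α' t : ℝ}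
    (h : IsConvexCombWithLast u k x c) (hc1 : c ≤ 1) (htc : t ≤ c) (ht : 0 ≤ t)
    (hA' : A' = A + α') (hA : 0 ≤ A) (hα' : 0 < α') (hy : y = A'⁻¹ • (α' • u k + A • x)) :
    IsConvexCombWithLast u (k + 1) (y + t • (u (k + 1) - u k)) t := by
  have hA'pos : 0 < A' := by linarith
  have hrec : y + t • (u (k + 1) - u k) =
      (A / A') • x + (α' / A' - t) • u k + t • u (k + 1) := by
    rw [hy]
    match_scalars <;> field_simp; ring
  have hb : 0 ≤ A / A' * c + (α' / A' - t) := by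
    have hr : A / A' = 1 - α' / A' := by rw [hA']; field_simp; ring
    rw [hr]
    nlinarith [div_pos hα' hA'pos]
  rw [hrec]
  refine h.step (div_nonneg hA hA'pos.le) hb ht ?_
  rw [hA']
  field_simp
  ring

end ConvexComb

theorem Convex.inv_add_smul_add_smul_mem {E : Type*} [AddCommGroup E] [Module ℝ E] {Q : Set E}
    (hQ : Convex ℝ Q) {p q : E} (hp : p ∈ Q) (hq : q ∈ Q) {a b : ℝ} (ha : 0 ≤ a) (hb : 0 ≤ b)
    (hab : 0 < a + b) : (a + b)⁻¹ • (a • p + b • q) ∈ Q := by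
  rw [smul_add, smul_smul, smul_smul]
  refine hQ hp hq (by positivity) (by positivity) ?_
  field_simp

section Coefficients

variable {ρ : ℝ} {α A : ℕ → ℝ}

theorem rho_mul_alpha_one (hρ : 1 ≤ ρ) (hA0 : A 0 = 1 - 1 / ρ)
    (hA : ∀ k : ℕ, A (k + 1) = A k + α (k + 1))
    (hA2 : ∀ k : ℕ, A (k + 1) = ρ ^ 2 * α (k + 1) ^ 2) (hα : 0 < α 1) :
    ρ * α 1 = 1 := by
  have hρ0 : 0 < ρ := by linarith
  have hinv : 1 / ρ ≤ 1 := (div_le_one hρ0).mpr hρ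
  have hroot : (ρ * α 1 - 1) * (ρ * α 1 + 1 - 1 / ρ) = 0 := by
    have := hA2 0
    rw [hA 0, hA0] at this
    have hρinv : ρ * (1 / ρ) = 1 := by field_simp
    linear_combination -this - α 1 * hρinv
  rcases mul_eq_zero.mp hroot with h | h
  · linarith
  · nlinarith [mul_pos hρ0 hα]

theorem A_nonneg (hρ : 1 ≤ ρ) (hA0 : A 0 = 1 - 1 / ρ)
    (hA2 : ∀ k : ℕ, A (k + 1) = ρ ^ 2 * α (k + 1) ^ 2) : ∀ k, 0 ≤ A k
  | 0 => by rw [hA0, sub_nonneg, div_le_one (by linarith)]; exact hρ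
  | k + 1 => by rw [hA2]; positivity

theorem alpha_succ_lt_alpha_succ_succ (hA : ∀ k : ℕ, A (k + 1) = A k + α (k + 1))
    (hA2 : ∀ k : ℕ, A (k + 1) = ρ ^ 2 * α (k + 1) ^ 2) (hα : ∀ k : ℕ, 0 < α (k + 1)) (k : ℕ) :
    α (k + 1) < α (k + 2) := by
  have hsq : ρ ^ 2 * α (k + 1) ^ 2 < ρ ^ 2 * α (k + 2) ^ 2 := by
    rw [← hA2, ← hA2, hA (k + 1)]
    linarith [hα (k + 1)]
  exact lt_of_pow_lt_pow_left₀ 2 (hα (k + 1)).le (lt_of_mul_lt_mul_left hsq (sq_nonneg ρ))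

theorem one_le_rho_mul_alpha (hρ : 1 ≤ ρ) (hA0 : A 0 = 1 - 1 / ρ)
    (hA : ∀ k : ℕ, A (k + 1) = A k + α (k + 1))
    (hA2 : ∀ k : ℕ, A (k + 1) = ρ ^ 2 * α (k + 1) ^ 2) (hα : ∀ k : ℕ, 0 < α (k + 1)) (k : ℕ) :
    1 ≤ ρ * α (k + 1) := by
  have hmono : Monotone fun k => α (k + 1) :=
    monotone_nat_of_le_succ fun k => (alpha_succ_lt_alpha_succ_succ hA hA2 hα k).le
  calc 1 = ρ * α 1 := (rho_mul_alpha_one hρ hA0 hA hA2 (hα 0)).symm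
    _ ≤ ρ * α (k + 1) := by gcongr; exact hmono (Nat.zero_le k)

theorem rho_mul_alpha_div_eq_inv (hρ : ρ ≠ 0) (hA2 : ∀ k : ℕ, A (k + 1) = ρ ^ 2 * α (k + 1) ^ 2)
    {k : ℕ} (hα : α (k + 1) ≠ 0) : ρ * α (k + 1) / A (k + 1) = (ρ * α (k + 1))⁻¹ := by
  rw [hA2]
  field_simp

theorem rho_mul_alpha_div_le_one (hρ : 1 ≤ ρ) (hA0 : A 0 = 1 - 1 / ρ)
    (hA : ∀ k : ℕ, A (k + 1) = A k + α (k + 1))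
    (hA2 : ∀ k : ℕ, A (k + 1) = ρ ^ 2 * α (k + 1) ^ 2) (hα : ∀ k : ℕ, 0 < α (k + 1)) (k : ℕ) :
    ρ * α (k + 1) / A (k + 1) ≤ 1 := by
  rw [rho_mul_alpha_div_eq_inv (by linarith) hA2 (hα k).ne']
  exact inv_le_one_of_one_le₀ (one_le_rho_mul_alpha hρ hA0 hA hA2 hα k)

theorem rho_mul_alpha_div_succ_le (hρ : 1 ≤ ρ) (hA : ∀ k : ℕ, A (k + 1) = A k + α (k + 1))
    (hA2 : ∀ k : ℕ, A (k + 1) = ρ ^ 2 * α (k + 1) ^ 2) (hα : ∀ k : ℕ, 0 < α (k + 1)) (k : ℕ) :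
    ρ * α (k + 2) / A (k + 2) ≤ ρ * α (k + 1) / A (k + 1) := by
  have hρ0 : 0 < ρ := by linarith
  rw [rho_mul_alpha_div_eq_inv hρ0.ne' hA2 (hα k).ne',
    rho_mul_alpha_div_eq_inv hρ0.ne' hA2 (hα (k + 1)).ne']
  have := hα k
  exact inv_anti₀ (by positivity) (by gcongr; exact (alpha_succ_lt_alpha_succ_succ hA hA2 hα k).le)

end Coefficients

theorem stmt_16_general {E : Type*} [AddCommGroup E] [Module ℝ E]
    (Q : Set E) (hQ : Convex ℝ Q) (ρ : ℝ) (hρ : 1 ≤ ρ)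
    (α A : ℕ → ℝ) (u x y : ℕ → E)
    (hA0 : A 0 = 1 - 1 / ρ)
    (hA : ∀ k : ℕ, A (k + 1) = A k + α (k + 1))
    (hA2 : ∀ k : ℕ, A (k + 1) = ρ ^ 2 * α (k + 1) ^ 2)
    (hαpos : ∀ k : ℕ, 0 < α (k + 1))
    (hx0 : x 0 = u 0) (hy0 : y 0 = u 0)
    (hy : ∀ k : ℕ, y (k + 1) = (A (k + 1))⁻¹ • (α (k + 1) • u k + A k • x k))
    (hx : ∀ k : ℕ, x (k + 1) = y (k + 1) + (ρ * α (k + 1) / A (k + 1)) • (u (k + 1) - u k))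
    (hu : ∀ k : ℕ, u k ∈ Q) :
    ∀ k : ℕ,
      (∃ γ : ℕ → ℝ, (∀ l, 0 ≤ γ l) ∧ (∑ l ∈ Finset.range (k + 1), γ l) = 1 ∧
        x k = ∑ l ∈ Finset.range (k + 1), γ l • u l) ∧
      x k ∈ Q ∧ y k ∈ Q := by
  have hA_nonneg := A_nonneg hρ hA0 hA2
  have hstep (k : ℕ) {c : ℝ} (h : IsConvexCombWithLast u k (x k) c) (hc1 : c ≤ 1)
      (hc : ρ * α (k + 1) / A (k + 1) ≤ c) :
      IsConvexCombWithLast u (k + 1) (x (k + 1)) (ρ * α (k + 1) / A (k + 1)) := by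
    have := hαpos k
    rw [hx]
    exact h.rstm_step hc1 hc (by rw [hA2]; positivity) (hA k) (hA_nonneg k) this (hy k)
  have hcomb (k : ℕ) :
      IsConvexCombWithLast u (k + 1) (x (k + 1)) (ρ * α (k + 1) / A (k + 1)) := by
    induction k with
    | zero =>
      exact hstep 0 (hx0 ▸ isConvexCombWithLast_zero u) le_rfl
        (rho_mul_alpha_div_le_one hρ hA0 hA hA2 hαpos 0)
    | succ k ih =>
      exact hstep (k + 1) ih (rho_mul_alpha_div_le_one hρ hA0 hA hA2 hαpos k)
        (rho_mul_alpha_div_succ_le hρ hA hA2 hαpos k)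
  have hcomb' : ∀ k, ∃ c, IsConvexCombWithLast u k (x k) c
    | 0 => ⟨1, hx0 ▸ isConvexCombWithLast_zero u⟩
    | k + 1 => ⟨_, hcomb k⟩
  have hxQ (k : ℕ) : x k ∈ Q := by
    obtain ⟨c, h⟩ := hcomb' k
    exact h.mem hQ hu
  intro k
  obtain ⟨c, γ, hγ, hsum, hxk, -⟩ := hcomb' k
  refine ⟨⟨γ, hγ, hsum, hxk⟩, hxQ k, ?_⟩
  cases k with
  | zero => exact hy0 ▸ hu 0
  | succ k =>
    rw [hy, hA, add_comm]
    exact hQ.inv_add_smul_add_smul_mem (hu k) (hxQ k) (hαpos k).le (hA_nonneg k)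
      (by linarith [hαpos k, hA_nonneg k])

/-- Correctness of RSTM iterates (Lemma 1): with `ρ ≥ 1`,
`A 0 = α 0 = 1 - 1/ρ`, `A (k+1) = A k + α (k+1) = ρ²·α (k+1)²` (largest, hence positive,
roots), `x 0 = y 0 = u 0`, `y (k+1) = (α (k+1)·u k + A k·x k)/A (k+1)` and
`x (k+1) = y (k+1) + ρ(α (k+1)/A (k+1))·(u (k+1) - u k)`, if all `u k` lie in a convex set
`Q` then every `x k` is a convex combination of `u 0, ..., u k`, and `x k, y k ∈ Q`. -/
theorem stmt_16 {E : Type*} [AddCommGroup E] [Module ℝ E]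
    (Q : Set E) (hQ : Convex ℝ Q) (ρ : ℝ) (hρ : 1 ≤ ρ)
    (α A : ℕ → ℝ) (u x y : ℕ → E)
    (hα0 : α 0 = 1 - 1 / ρ) (hA0 : A 0 = 1 - 1 / ρ)
    (hA : ∀ k : ℕ, A (k + 1) = A k + α (k + 1))
    (hA2 : ∀ k : ℕ, A (k + 1) = ρ ^ 2 * α (k + 1) ^ 2)
    (hαpos : ∀ k : ℕ, 0 < α (k + 1))
    (hx0 : x 0 = u 0) (hy0 : y 0 = u 0)
    (hy : ∀ k : ℕ, y (k + 1) = (A (k + 1))⁻¹ • (α (k + 1) • u k + A k • x k))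
    (hx : ∀ k : ℕ, x (k + 1) = y (k + 1) + (ρ * α (k + 1) / A (k + 1)) • (u (k + 1) - u k))
    (hu : ∀ k : ℕ, u k ∈ Q) :
    ∀ k : ℕ,
      (∃ γ : ℕ → ℝ, (∀ l, 0 ≤ γ l) ∧ (∑ l ∈ Finset.range (k + 1), γ l) = 1 ∧
        x k = ∑ l ∈ Finset.range (k + 1), γ l • u l) ∧
      x k ∈ Q ∧ y k ∈ Q :=
  stmt_16_general Q hQ ρ hρ α A u x y hA0 hA hA2 hαpos hx0 hy0 hy hx hu
end
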